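/- Let n ≥ 2 be an integer, I ⊂ ℝ an open interval containing 0, and (γ, ν) : I → ℝ² × S¹ a Legendre immersion without inflection points. Assume t = 0 is a singular point of γ, i.e. γ'(0) = 0. If t = 0 is a singular point of Evⁱ(γ) for every i = 1, …, n−1, then γ is not 𝒜-equivalent at t = 0 to Cusp_{(n,n+1)}(t) = (tⁿ, t^{n+1}). -/

import Mathlib

open Filter Topology Asymptotics
open scoped ContDiff

/-- The determinant of the 2×2 matrix with columns `u` and `v`. -/
def det2 (u v : ℝ × ℝ) : ℝ := u.1 * v.2 - u.2 * v.1

/-- `Φ` is a `C^r` diffeomorphism germ at the origin (fixing the origin), with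
inverse germ `Φinv`. -/
def IsDiffeoGermAt0 {E : Type*} [NormedAddCommGroup E] [NormedSpace ℝ E]
    (r : WithTop ℕ∞) (Φ Φinv : E → E) : Prop :=
  Φ 0 = 0 ∧ Φinv 0 = 0 ∧ ContDiffAt ℝ r Φ 0 ∧ ContDiffAt ℝ r Φinv 0 ∧
    (∀ᶠ x in nhds (0 : E), Φinv (Φ x) = x) ∧ (∀ᶠ x in nhds (0 : E), Φ (Φinv x) = x)

/-- Two map germs `γ₁ γ₂ : (ℝ,0) → (ℝ²,0)` are `C^r`-equivalent at `t = 0`: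
there are `C^r` diffeomorphism germs `ψ : (ℝ,0) → (ℝ,0)` and `Ψ : (ℝ²,0) → (ℝ²,0)`
with `Ψ ∘ γ₁ = γ₂ ∘ ψ` near `0`.  For `r = ∞` this is 𝒜-equivalence, for
`r = 1` it is `C¹`-equivalence. -/
def CEquivAt0 (r : WithTop ℕ∞) (γ₁ γ₂ : ℝ → ℝ × ℝ) : Prop :=
  γ₁ 0 = 0 ∧ γ₂ 0 = 0 ∧
    ∃ (ψ ψinv : ℝ → ℝ) (Ψ Ψinv : ℝ × ℝ → ℝ × ℝ),
      IsDiffeoGermAt0 r ψ ψinv ∧ IsDiffeoGermAt0 r Ψ Ψinv ∧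
      ∀ᶠ t in nhds (0 : ℝ), Ψ (γ₁ t) = γ₂ (ψ t)

/-- The dot product on `ℝ²`. -/
def dot2 (u v : ℝ × ℝ) : ℝ := u.1 * v.1 + u.2 * v.2

/-- The Euclidean norm on `ℝ²`. -/
noncomputable def norm2 (u : ℝ × ℝ) : ℝ := Real.sqrt (u.1 ^ 2 + u.2 ^ 2)

/-- `rot2` is the anticlockwise rotation of `ℝ²` by `π/2`. -/
def rot2 (u : ℝ × ℝ) : ℝ × ℝ := (-u.2, u.1)

/-- `(γ, ν)` is a Legendre immersion on `I` (with `ν` circle-valued). -/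
def IsLegendreImmersionOn (γ ν : ℝ → ℝ × ℝ) (I : Set ℝ) : Prop :=
  ContDiffOn ℝ ∞ γ I ∧ ContDiffOn ℝ ∞ ν I ∧
    (∀ t ∈ I, norm2 (ν t) = 1) ∧
    (∀ t ∈ I, dot2 (deriv γ t) (ν t) = 0) ∧
    (∀ t ∈ I, ¬(deriv γ t = 0 ∧ deriv ν t = 0))

/-- `ell ν t = ν'(t) · μ(t)`, where `μ = rot2 ∘ ν`. -/
noncomputable def ell (ν : ℝ → ℝ × ℝ) (t : ℝ) : ℝ := dot2 (deriv ν t) (rot2 (ν t))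

/-- `bet γ ν 0 = β = γ' · μ` and `bet γ ν (k+1) = (bet γ ν k / ell ν)'`. -/
noncomputable def bet (γ ν : ℝ → ℝ × ℝ) : ℕ → ℝ → ℝ
  | 0 => fun t => dot2 (deriv γ t) (rot2 (ν t))
  | k + 1 => fun t => deriv (fun s => bet γ ν k s / ell ν s) t

/-- The `k`-th evolute of the front `γ`:
`Ev⁰(γ) = γ` and `Evᵏ(γ)(t) = Ev^{k-1}(γ)(t) − (β_{k-1}(t)/ℓ(t)) • M^{k-1}(ν(t))`. -/
noncomputable def evolute (γ ν : ℝ → ℝ × ℝ) : ℕ → ℝ → ℝ × ℝ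
  | 0 => γ
  | k + 1 => fun t => evolute γ ν k t - (bet γ ν k t / ell ν t) • rot2^[k] (ν t)


lemma aux_rot2_smul (c : ℝ) (u : ℝ × ℝ) : rot2 (c • u) = c • rot2 u := by
  simp [rot2, Prod.ext_iff, mul_comm]

lemma aux_rot2_rot2 (u : ℝ × ℝ) : rot2 (rot2 u) = -u := by
  simp [rot2, Prod.ext_iff]

lemma aux_rot2_eq_zero {u : ℝ × ℝ} (h : rot2 u = 0) : u = 0 := by
  rcases u with ⟨a, b⟩
  simp [rot2, Prod.ext_iff] at h ⊢
  exact ⟨h.2, h.1⟩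

lemma aux_hasDerivAt_rot2 {f : ℝ → ℝ × ℝ} {u : ℝ × ℝ} {t : ℝ} (h : HasDerivAt f u t) :
    HasDerivAt (fun s => rot2 (f s)) (rot2 u) t := by
  have h1 : HasDerivAt (fun s => (f s).1) u.1 t := h.fst
  have h2 : HasDerivAt (fun s => (f s).2) u.2 t := h.snd
  exact HasDerivAt.prodMk h2.neg h1

lemma aux_decomp2 (u w : ℝ × ℝ) (hw : w.1 * w.1 + w.2 * w.2 = 1) (hu : dot2 u w = 0) :
    u = dot2 u (rot2 w) • rot2 w := by
  rcases u with ⟨a, b⟩; rcases w with ⟨c, d⟩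
  simp only [dot2, rot2, Prod.ext_iff, Prod.smul_mk, smul_eq_mul] at *
  constructor
  · linear_combination (-a) * hw + c * hu
  · linear_combination (-b) * hw + d * hu

lemma aux_contDiff_rot2 : ContDiff ℝ ∞ rot2 :=
  ContDiff.prodMk (contDiff_snd.neg) contDiff_fst

lemma aux_contDiffOn_dot2 {f g : ℝ → ℝ × ℝ} {I : Set ℝ}
    (hf : ContDiffOn ℝ ∞ f I) (hg : ContDiffOn ℝ ∞ g I) :
    ContDiffOn ℝ ∞ (fun t => dot2 (f t) (g t)) I := by
  have f1 : ContDiffOn ℝ ∞ (fun t => (f t).1) I := contDiff_fst.comp_contDiffOn hf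
  have f2 : ContDiffOn ℝ ∞ (fun t => (f t).2) I := contDiff_snd.comp_contDiffOn hf
  have g1 : ContDiffOn ℝ ∞ (fun t => (g t).1) I := contDiff_fst.comp_contDiffOn hg
  have g2 : ContDiffOn ℝ ∞ (fun t => (g t).2) I := contDiff_snd.comp_contDiffOn hg
  exact (f1.mul g1).add (f2.mul g2)


/-- MVT step: if `f 0 = 0` and `f' = o(t^k)` then `f = o(t^(k+1))`. -/
lemma aux_isLittleO_pow_succ {E : Type*} [NormedAddCommGroup E] [NormedSpace ℝ E]
    {f : ℝ → E} {k : ℕ} {U : Set ℝ} (hU : IsOpen U) (h0 : (0:ℝ) ∈ U)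
    (hdiff : ∀ t ∈ U, DifferentiableAt ℝ f t) (hf0 : f 0 = 0)
    (hd : (deriv f) =o[nhds 0] fun t => t ^ k) :
    f =o[nhds 0] fun t => t ^ (k+1) := by
  rw [isLittleO_iff] at hd ⊢
  intro c hc
  have h2 : ∀ᶠ t in nhds (0:ℝ), t ∈ U ∧ ‖deriv f t‖ ≤ c * ‖t ^ k‖ :=
    (hU.eventually_mem h0).and (hd hc)
  rw [Metric.eventually_nhds_iff_ball] at h2
  obtain ⟨δ, hδ, hball⟩ := h2
  rw [Metric.eventually_nhds_iff_ball]
  refine ⟨δ, hδ, fun t ht => ?_⟩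
  have htδ : |t| < δ := by
    have := Metric.mem_ball.mp ht
    rwa [Real.dist_eq, sub_zero] at this
  have hsub : Metric.closedBall (0:ℝ) |t| ⊆ Metric.ball (0:ℝ) δ := by
    intro x hx
    rw [Metric.mem_closedBall, Real.dist_eq, sub_zero] at hx
    rw [Metric.mem_ball, Real.dist_eq, sub_zero]
    linarith
  have key : ‖f t - f 0‖ ≤ (c * |t| ^ k) * ‖t - 0‖ := by
    refine Convex.norm_image_sub_le_of_norm_hasDerivWithin_le
      (f := f) (f' := deriv f) (s := Metric.closedBall (0:ℝ) |t|)
      (fun x hx => ((hdiff x (hball x (hsub hx)).1).hasDerivAt).hasDerivWithinAt)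
      (fun x hx => ?_) (convex_closedBall _ _) ?_ ?_
    · have hb := (hball x (hsub hx)).2
      have hxt : |x| ≤ |t| := by
        have := Metric.mem_closedBall.mp hx
        rwa [Real.dist_eq, sub_zero] at this
      calc ‖deriv f x‖ ≤ c * ‖x ^ k‖ := hb
        _ = c * |x| ^ k := by rw [norm_pow, Real.norm_eq_abs]
        _ ≤ c * |t| ^ k := by
            exact mul_le_mul_of_nonneg_left (pow_le_pow_left₀ (abs_nonneg _) hxt k) hc.le
    · simp [abs_nonneg]
    · simp [Real.dist_eq]
  rw [hf0, sub_zero] at key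
  calc ‖f t‖ ≤ (c * |t| ^ k) * ‖t - 0‖ := key
    _ = c * ‖t ^ (k+1)‖ := by
        rw [sub_zero, Real.norm_eq_abs, norm_pow, Real.norm_eq_abs, pow_succ]; ring

/-- The key analytic lemma: under the hypotheses of `stmt_4`, all the "bet"
functions vanish at `0` and consequently `deriv γ = o(t^(n-1))` at `0`. -/
lemma aux_deriv_gamma_littleO (n : ℕ) (hn : 2 ≤ n) (I : Set ℝ) (hI : IsOpen I)
    (hI0 : (0 : ℝ) ∈ I) (γ ν : ℝ → ℝ × ℝ) (hLeg : IsLegendreImmersionOn γ ν I)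
    (hnoinfl : ∀ t ∈ I, ell ν t ≠ 0)
    (hsing : deriv γ 0 = 0)
    (hEv : ∀ i, 1 ≤ i → i ≤ n - 1 → deriv (evolute γ ν i) 0 = 0) :
    (deriv γ) =o[nhds 0] fun t => t ^ (n - 1) := by
  obtain ⟨hγs, hνs, hnorm, horth, -⟩ := hLeg
  have h1le : (1 : WithTop ℕ∞) ≤ ∞ := by norm_num
  have hsucc : (∞ : WithTop ℕ∞) + 1 ≤ ∞ := by norm_num
  -- unit vector facts
  have hunit : ∀ t ∈ I, (ν t).1 * (ν t).1 + (ν t).2 * (ν t).2 = 1 := by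
    intro t ht
    have h := hnorm t ht
    rw [norm2, Real.sqrt_eq_one] at h
    nlinarith [h]
  -- smoothness
  have hγ' : ContDiffOn ℝ ∞ (deriv γ) I := hγs.deriv_of_isOpen hI hsucc
  have hν' : ContDiffOn ℝ ∞ (deriv ν) I := hνs.deriv_of_isOpen hI hsucc
  have hℓs : ContDiffOn ℝ ∞ (ell ν) I :=
    aux_contDiffOn_dot2 hν' (aux_contDiff_rot2.comp_contDiffOn hνs)
  have hβ0s : ContDiffOn ℝ ∞ (bet γ ν 0) I :=
    aux_contDiffOn_dot2 hγ' (aux_contDiff_rot2.comp_contDiffOn hνs)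
  have hq : ∀ k, ContDiffOn ℝ ∞ (fun t => bet γ ν k t / ell ν t) I ∧
      ContDiffOn ℝ ∞ (bet γ ν k) I := by
    intro k
    induction k with
    | zero => exact ⟨hβ0s.div hℓs hnoinfl, hβ0s⟩
    | succ k ih =>
      have hb : ContDiffOn ℝ ∞ (bet γ ν (k + 1)) I :=
        ih.1.deriv_of_isOpen hI hsucc
      exact ⟨hb.div hℓs hnoinfl, hb⟩
  -- derivatives
  have hνd : ∀ t ∈ I, HasDerivAt ν (deriv ν t) t := fun t ht =>
    (((hνs.contDiffAt (hI.mem_nhds ht)).differentiableAt (by simp))).hasDerivAt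
  have hγd0 : ∀ t ∈ I, HasDerivAt γ (deriv γ t) t := fun t ht =>
    (((hγs.contDiffAt (hI.mem_nhds ht)).differentiableAt (by simp))).hasDerivAt
  have hν_perp : ∀ t ∈ I, dot2 (deriv ν t) (ν t) = 0 := by
    intro t ht
    have hD : HasDerivAt (fun s => (ν s).1 * (ν s).1 + (ν s).2 * (ν s).2)
        ((deriv ν t).1 * (ν t).1 + (ν t).1 * (deriv ν t).1 +
          ((deriv ν t).2 * (ν t).2 + (ν t).2 * (deriv ν t).2)) t := by
      have h1 : HasDerivAt (fun s => (ν s).1) (deriv ν t).1 t := (hνd t ht).fst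
      have h2 : HasDerivAt (fun s => (ν s).2) (deriv ν t).2 t := (hνd t ht).snd
      exact (h1.mul h1).add (h2.mul h2)
    have hconst : (fun s => (ν s).1 * (ν s).1 + (ν s).2 * (ν s).2)
        =ᶠ[nhds t] fun _ => (1 : ℝ) := by
      filter_upwards [hI.eventually_mem ht] with s hs using hunit s hs
    have hz : deriv (fun s => (ν s).1 * (ν s).1 + (ν s).2 * (ν s).2) t = 0 := by
      rw [hconst.deriv_eq, deriv_const]
    have hv := hD.deriv
    rw [hz] at hv
    simp only [dot2]
    linarith
  have hν_eq : ∀ t ∈ I, deriv ν t = ell ν t • rot2 (ν t) := fun t ht =>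
    aux_decomp2 _ _ (hunit t ht) (hν_perp t ht)
  have hγ_eq : ∀ t ∈ I, deriv γ t = bet γ ν 0 t • rot2 (ν t) := fun t ht =>
    aux_decomp2 _ _ (hunit t ht) (horth t ht)
  have hνd' : ∀ t ∈ I, HasDerivAt ν (ell ν t • rot2 (ν t)) t := fun t ht =>
    (hν_eq t ht) ▸ hνd t ht
  have hγd : ∀ t ∈ I, HasDerivAt γ (bet γ ν 0 t • rot2 (ν t)) t := fun t ht =>
    (hγ_eq t ht) ▸ hγd0 t ht
  -- derivative of iterated rotations of ν
  have hrotd : ∀ k, ∀ t ∈ I,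
      HasDerivAt (fun s => rot2^[k] (ν s)) (ell ν t • rot2^[k] (rot2 (ν t))) t := by
    intro k
    induction k with
    | zero =>
      intro t ht
      simpa [Function.iterate_zero] using hνd' t ht
    | succ k ih =>
      intro t ht
      have := aux_hasDerivAt_rot2 (ih t ht)
      simp only [Function.iterate_succ_apply'] at this ⊢
      simpa [aux_rot2_smul] using this
  -- derivative of the quotients
  have hqd : ∀ k, ∀ t ∈ I,
      HasDerivAt (fun s => bet γ ν k s / ell ν s) (bet γ ν (k + 1) t) t := by
    intro k t ht
    have hdiff : DifferentiableAt ℝ (fun s => bet γ ν k s / ell ν s) t :=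
      ((hq k).1.contDiffAt (hI.mem_nhds ht)).differentiableAt (by simp)
    have := hdiff.hasDerivAt
    simpa [bet] using this
  -- derivative of the evolutes
  have hev : ∀ k, ∀ t ∈ I,
      HasDerivAt (evolute γ ν (k + 1)) (-(bet γ ν (k + 1) t) • rot2^[k] (ν t)) t := by
    intro k
    induction k with
    | zero =>
      intro t ht
      have h1 : HasDerivAt (fun s => (bet γ ν 0 s / ell ν s) • rot2^[0] (ν s))
          ((bet γ ν 0 t / ell ν t) • (ell ν t • rot2^[0] (rot2 (ν t))) +
            bet γ ν 1 t • rot2^[0] (ν t)) t :=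
        (hqd 0 t ht).smul (hrotd 0 t ht)
      have h2 := (hγd t ht).sub h1
      have hval : bet γ ν 0 t • rot2 (ν t) -
          ((bet γ ν 0 t / ell ν t) • (ell ν t • rot2^[0] (rot2 (ν t))) +
            bet γ ν 1 t • rot2^[0] (ν t)) = -(bet γ ν 1 t) • rot2^[0] (ν t) := by
        simp only [Function.iterate_zero, id_eq, smul_smul]
        rw [div_mul_cancel₀ _ (hnoinfl t ht)]
        module
      rw [hval] at h2
      show HasDerivAt (fun s => evolute γ ν 0 s - (bet γ ν 0 s / ell ν s) • rot2^[0] (ν s)) _ t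
      exact h2
    | succ k ih =>
      intro t ht
      have h1 : HasDerivAt (fun s => (bet γ ν (k + 1) s / ell ν s) • rot2^[k + 1] (ν s))
          ((bet γ ν (k + 1) t / ell ν t) • (ell ν t • rot2^[k + 1] (rot2 (ν t))) +
            bet γ ν (k + 2) t • rot2^[k + 1] (ν t)) t :=
        (hqd (k + 1) t ht).smul (hrotd (k + 1) t ht)
      have h2 := (ih t ht).sub h1
      have hrw : rot2^[k + 1] (rot2 (ν t)) = -(rot2^[k] (ν t)) := by
        rw [Function.iterate_succ_apply']
        rw [show rot2 (ν t) = rot2 (ν t) from rfl]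
        have : rot2^[k] (rot2 (ν t)) = rot2 (rot2^[k] (ν t)) := by
          rw [← Function.iterate_succ_apply, Function.iterate_succ_apply']
        rw [this, aux_rot2_rot2]
      have hval : -(bet γ ν (k + 1) t) • rot2^[k] (ν t) -
          ((bet γ ν (k + 1) t / ell ν t) • (ell ν t • rot2^[k + 1] (rot2 (ν t))) +
            bet γ ν (k + 2) t • rot2^[k + 1] (ν t)) =
          -(bet γ ν (k + 2) t) • rot2^[k + 1] (ν t) := by
        rw [hrw, smul_smul, div_mul_cancel₀ _ (hnoinfl t ht)]
        module
      rw [hval] at h2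
      show HasDerivAt
        (fun s => evolute γ ν (k + 1) s - (bet γ ν (k + 1) s / ell ν s) • rot2^[k + 1] (ν s)) _ t
      exact h2
  -- vanishing of bet at 0
  have hν0 : ν 0 ≠ 0 := by
    intro hc
    have := hunit 0 hI0
    rw [hc] at this
    norm_num at this
  have hrotne : ∀ k, rot2^[k] (ν 0) ≠ 0 := by
    intro k
    induction k with
    | zero => simpa using hν0
    | succ k ih =>
      rw [Function.iterate_succ_apply']
      intro hc
      exact ih (aux_rot2_eq_zero hc)
  have hbet0 : ∀ i, i ≤ n - 1 → bet γ ν i 0 = 0 := by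
    intro i hi
    match i with
    | 0 => simp [bet, hsing, dot2]
    | (j + 1) =>
      have hd := (hev j 0 hI0).deriv
      have h0 := hEv (j + 1) (by omega) hi
      rw [hd] at h0
      rcases smul_eq_zero.mp h0 with h | h
      · linarith [neg_eq_zero.mp h]
      · exact absurd h (hrotne j)
  -- big-O fact for ell
  have hℓO : (ell ν) =O[nhds 0] (fun _ => (1 : ℝ)) :=
    ((hℓs.contDiffAt (hI.mem_nhds hI0)).continuousAt.tendsto).isBigO_one ℝ
  -- main downward induction
  have hg0 : ∀ j, j ≤ n - 1 →
      (fun t => bet γ ν (n - 1 - j) t / ell ν t) =o[nhds 0] fun t => t ^ j := by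
    intro j
    induction j with
    | zero =>
      intro _
      have hc : ContinuousAt (fun t => bet γ ν (n - 1) t / ell ν t) 0 :=
        ((hq (n - 1)).1.contDiffAt (hI.mem_nhds hI0)).continuousAt
      have h00 : bet γ ν (n - 1) 0 / ell ν 0 = 0 := by
        rw [hbet0 (n - 1) le_rfl, zero_div]
      simp only [Nat.sub_zero, pow_zero]
      rw [isLittleO_one_iff]
      have := hc.tendsto
      rwa [h00] at this
    | succ j ih =>
      intro hj
      have hle : j ≤ n - 1 := by omega
      have hk1 : (n - 1 - (j + 1)) + 1 = n - 1 - j := by omega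
      set k := n - 1 - (j + 1) with hkdef
      have ih' : (fun t => bet γ ν (k + 1) t / ell ν t) =o[nhds 0] fun t => t ^ j := by
        rw [hk1]; exact ih hle
      have hder : deriv (fun t => bet γ ν k t / ell ν t) =o[nhds 0] fun t => t ^ j := by
        have heq2 : (fun t => ell ν t * (bet γ ν (k + 1) t / ell ν t))
            =ᶠ[nhds (0:ℝ)] deriv (fun s => bet γ ν k s / ell ν s) := by
          filter_upwards [hI.eventually_mem hI0] with t ht
          rw [(hqd k t ht).deriv, mul_comm, div_mul_cancel₀ _ (hnoinfl t ht)]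
        have hmul := hℓO.mul_isLittleO ih'
        refine hmul.congr' heq2 ?_
        filter_upwards with t using one_mul _
      exact aux_isLittleO_pow_succ hI hI0
        (fun t ht => ((hq k).1.contDiffAt (hI.mem_nhds ht)).differentiableAt (by simp))
        (by rw [hbet0 k (by omega), zero_div]) hder
  -- conclusion
  have hg := hg0 (n - 1) le_rfl
  rw [Nat.sub_self] at hg
  have hβo : (bet γ ν 0) =o[nhds 0] fun t => t ^ (n - 1) := by
    have heq2 : (fun t => ell ν t * (bet γ ν 0 t / ell ν t)) =ᶠ[nhds (0:ℝ)] bet γ ν 0 := by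
      filter_upwards [hI.eventually_mem hI0] with t ht
      rw [mul_comm, div_mul_cancel₀ _ (hnoinfl t ht)]
    refine (hℓO.mul_isLittleO hg).congr' heq2 ?_
    filter_upwards with t using one_mul _
  have hbigO : (deriv γ) =O[nhds 0] (bet γ ν 0) := by
    rw [isBigO_iff]
    refine ⟨1, ?_⟩
    filter_upwards [hI.eventually_mem hI0] with t ht
    rw [hγ_eq t ht, norm_smul]
    have h1 : |(ν t).1| ≤ 1 := by
      have := hunit t ht
      rw [abs_le]; constructor <;> nlinarith
    have h2 : |(ν t).2| ≤ 1 := by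
      have := hunit t ht
      rw [abs_le]; constructor <;> nlinarith
    have hμ : ‖rot2 (ν t)‖ ≤ 1 := by
      rw [Prod.norm_def]
      simp only [rot2, Real.norm_eq_abs, abs_neg]
      exact sup_le h2 h1
    calc ‖bet γ ν 0 t‖ * ‖rot2 (ν t)‖ ≤ ‖bet γ ν 0 t‖ * 1 :=
          mul_le_mul_of_nonneg_left hμ (norm_nonneg _)
      _ = 1 * ‖bet γ ν 0 t‖ := by ring
  exact hbigO.trans_isLittleO hβo

/-- If `t = 0` is a singular point of `γ` and of all the evolutes
`Ev¹(γ), …, Ev^{n-1}(γ)`, then `γ` is not 𝒜-equivalent at `t = 0` to the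
`(n,n+1)`-cusp. -/
theorem stmt_4 (n : ℕ) (hn : 2 ≤ n) (I : Set ℝ) (hI : IsOpen I) (hI0 : (0 : ℝ) ∈ I)
    (γ ν : ℝ → ℝ × ℝ) (hLeg : IsLegendreImmersionOn γ ν I)
    (hnoinfl : ∀ t ∈ I, ell ν t ≠ 0)
    (hsing : deriv γ 0 = 0)
    (hEv : ∀ i, 1 ≤ i → i ≤ n - 1 → deriv (evolute γ ν i) 0 = 0) :
    ¬ CEquivAt0 ∞ γ (fun t => (t ^ n, t ^ (n + 1))) := by
  intro h
  obtain ⟨hγ0, -, ψ, ψinv, Ψ, Ψinv, ⟨hψ0, hψi0, hψc, hψic, hψli, -⟩,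
    ⟨hΨ0, hΨi0, hΨc, hΨic, -, -⟩, heq⟩ := h
  have h1le : (1 : WithTop ℕ∞) ≤ ∞ := by norm_num
  -- γ = o(t^n)
  have hγo : γ =o[nhds 0] fun t => t ^ n := by
    have hd := aux_deriv_gamma_littleO n hn I hI hI0 γ ν hLeg hnoinfl hsing hEv
    have hres := aux_isLittleO_pow_succ hI hI0
      (fun t ht => ((hLeg.1.contDiffAt (hI.mem_nhds ht)).differentiableAt (by simp))) hγ0 hd
    rwa [show n - 1 + 1 = n from by omega] at hres
  obtain ⟨K, s, hs, hKs⟩ := (hΨc.of_le h1le).exists_lipschitzOnWith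
  obtain ⟨K', s', hs', hKs'⟩ := (hψic.of_le h1le).exists_lipschitzOnWith
  set C1 : ℝ := (K : ℝ) + 1 with hC1
  set C2 : ℝ := (K' : ℝ) + 1 with hC2
  have hK0 : (0:ℝ) ≤ (K : ℝ) := K.coe_nonneg
  have hK'0 : (0:ℝ) ≤ (K' : ℝ) := K'.coe_nonneg
  have hC1pos : 0 < C1 := by positivity
  have hC2pos : 0 < C2 := by positivity
  have hc : (0:ℝ) < 1 / (2 * C1 * C2 ^ n) := by positivity
  have e5 := (isLittleO_iff.mp hγo) hc
  have hγcont : Tendsto γ (nhds 0) (nhds 0) := by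
    have := (hLeg.1.contDiffAt (hI.mem_nhds hI0)).continuousAt.tendsto
    rwa [hγ0] at this
  have e1 : ∀ᶠ t in nhds (0:ℝ), γ t ∈ s := hγcont hs
  have hψcont : Tendsto ψ (nhds 0) (nhds 0) := by
    have := hψc.continuousAt.tendsto
    rwa [hψ0] at this
  have e2 : ∀ᶠ t in nhds (0:ℝ), ψ t ∈ s' := hψcont hs'
  have h0s : (0:ℝ×ℝ) ∈ s := mem_of_mem_nhds hs
  have h0s' : (0:ℝ) ∈ s' := mem_of_mem_nhds hs'
  have hall := (e1.and (e2.and (hψli.and (heq.and e5)))).filter_mono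
    (nhdsWithin_le_nhds : nhdsWithin (0:ℝ) {(0:ℝ)}ᶜ ≤ nhds 0)
  obtain ⟨t, ⟨hts, htψ, htinv, hteq, htlo⟩, htne⟩ :=
    (hall.and (self_mem_nhdsWithin : {(0:ℝ)}ᶜ ∈ nhdsWithin (0:ℝ) {(0:ℝ)}ᶜ)).exists
  have htne' : t ≠ 0 := htne
  have hteq' : Ψ (γ t) = (ψ t ^ n, ψ t ^ (n + 1)) := hteq
  -- bounds
  have hb1 : ‖Ψ (γ t)‖ ≤ C1 * ‖γ t‖ := by
    have hd := hKs.dist_le_mul (γ t) hts 0 h0s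
    rw [hΨ0, dist_zero_right, dist_zero_right] at hd
    calc ‖Ψ (γ t)‖ ≤ K * ‖γ t‖ := hd
      _ ≤ C1 * ‖γ t‖ := by
          apply mul_le_mul_of_nonneg_right _ (norm_nonneg _)
          rw [hC1]; linarith
  have hb2 : |t| ≤ C2 * |ψ t| := by
    have hd := hKs'.dist_le_mul (ψ t) htψ 0 h0s'
    rw [htinv, hψi0, Real.dist_eq, sub_zero, Real.dist_eq, sub_zero] at hd
    calc |t| ≤ K' * |ψ t| := hd
      _ ≤ C2 * |ψ t| := by
          apply mul_le_mul_of_nonneg_right _ (abs_nonneg _)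
          rw [hC2]; linarith
  have hb3 : |ψ t| ^ n ≤ ‖Ψ (γ t)‖ := by
    rw [hteq', Prod.norm_def]
    calc |ψ t| ^ n = ‖ψ t ^ n‖ := by rw [Real.norm_eq_abs, abs_pow]
      _ ≤ _ := le_max_left _ _
  have hb5 : ‖γ t‖ ≤ (1 / (2 * C1 * C2 ^ n)) * |t| ^ n := by
    have := htlo
    rwa [Real.norm_eq_abs (t ^ n), abs_pow] at this
  have h6 : |t| ^ n ≤ C2 ^ n * |ψ t| ^ n := by
    calc |t| ^ n ≤ (C2 * |ψ t|) ^ n := pow_le_pow_left₀ (abs_nonneg _) hb2 n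
      _ = C2 ^ n * |ψ t| ^ n := mul_pow _ _ _
  have hpos : 0 < |t| ^ n := pow_pos (abs_pos.mpr htne') n
  have h7 : |t| ^ n ≤ C2 ^ n * (C1 * ((1 / (2 * C1 * C2 ^ n)) * |t| ^ n)) := by
    calc |t| ^ n ≤ C2 ^ n * |ψ t| ^ n := h6
      _ ≤ C2 ^ n * ‖Ψ (γ t)‖ :=
          mul_le_mul_of_nonneg_left hb3 (by positivity)
      _ ≤ C2 ^ n * (C1 * ‖γ t‖) :=
          mul_le_mul_of_nonneg_left hb1 (by positivity)
      _ ≤ C2 ^ n * (C1 * ((1 / (2 * C1 * C2 ^ n)) * |t| ^ n)) := by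
          apply mul_le_mul_of_nonneg_left _ (by positivity)
          exact mul_le_mul_of_nonneg_left hb5 hC1pos.le
  have h8 : C2 ^ n * (C1 * ((1 / (2 * C1 * C2 ^ n)) * |t| ^ n)) = |t| ^ n / 2 := by
    field_simp
  rw [h8] at h7
  linarith
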